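/- Let C be an F_q-linear subspace of F_q^m × F_q^n × F_q^m of dimension m + k, let Ĉ be its twisted dual constraint code, and let y ∈ ℂ satisfy 1 + (q−1)y ≠ 0. Then in the ring of matrices over ℂ[[D]] indexed by F_q^m: (I − D·Λ_Ĉ(1,y))⁻¹ = (1/q^m) · F_m · (I − D·((1+(q−1)y)^n/q^k)·Λ_C(1, (1−y)/(1+(q−1)y)))⁻¹ · F_m†. -/

import Mathlib

/-!
Writing `ψ = ω^{tr(·)}`, the indicator of `Ĉ` is `|C|⁻¹ ∑_{c ∈ C} ψ(⟨v, c⟩)` for the twisted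
pairing `⟨·,·⟩`. Substituting this into `Λ_Ĉ(1,y)` and summing over the middle coordinate one
position at a time (each position contributes `1 + (q-1)y` or `1 - y`) gives the MacWilliams-type
identity `Λ_Ĉ(1,y) = ((1+(q-1)y)^n / |C|) · F_m Λ_C(1,z) F_m†` with `z = (1-y)/(1+(q-1)y)`.
Since `F_m F_m† = q^m I`, the matrix `I - D·Λ_Ĉ(1,y)` is the conjugate of
`I - D·((1+(q-1)y)^n / q^k)·Λ_C(1,z)` by `F_m`, and inverting a conjugate `P M P⁻¹` gives
`P M⁻¹ P⁻¹`.
-/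

open scoped Classical
open Matrix

noncomputable section

variable (p : ℕ) [Fact p.Prime] (F : Type) [Field F] [Fintype F] [Algebra (ZMod p) F]

/-- Hamming weight of a vector. -/
def wt {n : ℕ} (v : Fin n → F) : ℕ := (Finset.univ.filter fun i => v i ≠ 0).card

/-- The twisted dual constraint code. -/
def twistedDual {m n : ℕ} (C : Set ((Fin m → F) × (Fin n → F) × (Fin m → F))) :
    Set ((Fin m → F) × (Fin n → F) × (Fin m → F)) :=
  {v | ∀ c ∈ C, (∑ i, v.1 i * c.1 i) + (∑ i, v.2.1 i * c.2.1 i)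
      - (∑ i, v.2.2 i * c.2.2 i) = 0}

/-- The weight adjacency matrix `Λ_S(x,y)`. -/
def WAM {m n : ℕ} (S : Set ((Fin m → F) × (Fin n → F) × (Fin m → F)))
    (x y : ℂ) : Matrix (Fin m → F) (Fin m → F) ℂ := fun w w' =>
  ∑ pv : Fin n → F, if (w, pv, w') ∈ S then x ^ (n - wt F pv) * y ^ wt F pv else 0

/-- The Fourier matrix `F_m` with `(a,b)` entry `ω^{tr(a·b)}`. -/
def FourierMat (m : ℕ) : Matrix (Fin m → F) (Fin m → F) ℂ := fun a b =>
  Complex.exp (2 * Real.pi * Complex.I / p) ^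
    (Algebra.trace (ZMod p) F (∑ i, a i * b i)).val

/-- The matrix `I − D·M` over `ℂ[[D]]` associated with a complex matrix `M`. -/
def oneSubDM {m : ℕ} (M : Matrix (Fin m → F) (Fin m → F) ℂ) :
    Matrix (Fin m → F) (Fin m → F) (PowerSeries ℂ) :=
  1 - (PowerSeries.X : PowerSeries ℂ) • M.map (PowerSeries.C : ℂ →+* PowerSeries ℂ)

lemma AddChar.map_sum_eq_prod {A M ι : Type*} [AddCommMonoid A] [CommMonoid M]
    (ψ : AddChar A M) (s : Finset ι) (f : ι → A) :
    ψ (∑ i ∈ s, f i) = ∏ i ∈ s, ψ (f i) := by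
  induction s using Finset.cons_induction with
  | empty => simp
  | cons a s _ ih => rw [Finset.sum_cons, Finset.prod_cons, AddChar.map_add_eq_mul, ih]

section CharacterSums

variable {K R V : Type*} [Field K] [CommRing R] [IsDomain R] [AddCommGroup V] [Module K V]
  [Fintype V] {ψ : AddChar K R}

lemma sum_addChar_linearMap (hψ : ψ ≠ 1) (f : V →ₗ[K] K) :
    ∑ v, ψ (f v) = if f = 0 then (Fintype.card V : R) else 0 := by
  split_ifs with hf
  · simp [hf]
  · refine AddChar.sum_eq_zero_of_ne_one (ψ := ψ.compAddMonoidHom f.toAddMonoidHom) fun h ↦ hψ ?_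
    ext x
    obtain ⟨v, rfl⟩ := LinearMap.surjective hf x
    exact DFunLike.congr_fun h v

lemma sum_submodule_addChar_linearMap (hψ : ψ ≠ 1) (W : Submodule K V) (f : V →ₗ[K] K) :
    ∑ c : W, ψ (f c) = if ∀ c ∈ W, f c = 0 then (Fintype.card W : R) else 0 := by
  have h := sum_addChar_linearMap hψ (f ∘ₗ W.subtype)
  simp only [LinearMap.comp_apply, Submodule.subtype_apply] at h
  rw [h]
  congr 1
  simp [LinearMap.ext_iff]

variable [Fintype K]

lemma sum_addChar_mul_mul_ite (hψ : ψ ≠ 1) (s : K) (y : R) :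
    ∑ t : K, ψ (t * s) * (if t = 0 then 1 else y)
      = if s = 0 then 1 + ((Fintype.card K : R) - 1) * y else 1 - y := by
  have hsplit : ∀ t : K, ψ (t * s) * (if t = 0 then 1 else y)
      = ψ (t * s) * y + (if t = 0 then 1 - y else 0) := fun t ↦ by
    split_ifs with ht <;> simp [ht]
  simp only [hsplit, Finset.sum_add_distrib, ← Finset.sum_mul,
    AddChar.sum_mulShift s (AddChar.IsPrimitive.of_ne_one hψ), Finset.sum_ite_eq',
    Finset.mem_univ, if_true]
  split_ifs <;> ring

end CharacterSums

lemma pow_wt_eq_prod {K : Type} [Field K] {R : Type*} [CommMonoid R] {n : ℕ} (y : R)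
    (u : Fin n → K) : y ^ wt K u = ∏ i, if u i = 0 then 1 else y := by
  rw [Finset.prod_ite, Finset.prod_const_one, Finset.prod_const, one_mul, wt]

lemma sum_addChar_dotProduct_mul_pow_wt {K : Type} [Field K] [Fintype K] {R : Type*} [Field R]
    {ψ : AddChar K R} (hψ : ψ ≠ 1) {n : ℕ} (u : Fin n → K) {y : R}
    (hy : 1 + ((Fintype.card K : R) - 1) * y ≠ 0) :
    ∑ v : Fin n → K, ψ (v ⬝ᵥ u) * y ^ wt K v
      = (1 + ((Fintype.card K : R) - 1) * y) ^ n
          * ((1 - y) / (1 + ((Fintype.card K : R) - 1) * y)) ^ wt K u := by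
  calc ∑ v : Fin n → K, ψ (v ⬝ᵥ u) * y ^ wt K v
      = ∑ v : Fin n → K, ∏ i, ψ (v i * u i) * (if v i = 0 then 1 else y) := by
        refine Finset.sum_congr rfl fun v _ ↦ ?_
        rw [dotProduct, AddChar.map_sum_eq_prod, pow_wt_eq_prod, Finset.prod_mul_distrib]
    _ = ∏ i, ∑ t : K, ψ (t * u i) * (if t = 0 then 1 else y) :=
        (Fintype.prod_sum fun i t ↦ ψ (t * u i) * (if t = 0 then 1 else y)).symm
    _ = ∏ i, (1 + ((Fintype.card K : R) - 1) * y)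
          * (if u i = 0 then 1 else (1 - y) / (1 + ((Fintype.card K : R) - 1) * y)) := by
        refine Finset.prod_congr rfl fun i _ ↦ ?_
        rw [sum_addChar_mul_mul_ite hψ]
        split_ifs
        · rw [mul_one]
        · exact (mul_div_cancel₀ _ hy).symm
    _ = _ := by
        rw [Finset.prod_mul_distrib, Finset.prod_const, Finset.card_univ, Fintype.card_fin,
          pow_wt_eq_prod]

lemma sum_addChar_dotProduct_mul_conj {K : Type*} [Field K] [Fintype K] {ψ : AddChar K ℂ}
    (hψ : ψ ≠ 1) {m : ℕ} (w w' : Fin m → K) :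
    ∑ b, ψ (w ⬝ᵥ b) * starRingEnd ℂ (ψ (w' ⬝ᵥ b))
      = if w = w' then (Fintype.card K : ℂ) ^ m else 0 := by
  have hfactor : ∀ b, ψ (w ⬝ᵥ b) * starRingEnd ℂ (ψ (w' ⬝ᵥ b))
      = ψ (dotProductEquiv K (Fin m) (w - w') b) := fun b ↦ by
    rw [← AddChar.map_neg_eq_conj, ← AddChar.map_add_eq_mul, dotProductEquiv_apply_apply,
      sub_dotProduct, sub_eq_add_neg]
  simp only [hfactor, sum_addChar_linearMap hψ, LinearEquiv.map_eq_zero_iff, sub_eq_zero,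
    Fintype.card_fun, Fintype.card_fin, Nat.cast_pow]

section TraceCharacter

variable (ℓ : ℕ) [Fact ℓ.Prime] (K : Type) [Field K] [Algebra (ZMod ℓ) K]

def traceChar : AddChar K ℂ :=
  ZMod.stdAddChar.compAddMonoidHom (Algebra.trace (ZMod ℓ) K).toAddMonoidHom

lemma FourierMat_apply {m : ℕ} (a b : Fin m → K) :
    FourierMat ℓ K m a b = traceChar ℓ K (a ⬝ᵥ b) := by
  rw [FourierMat, traceChar, AddChar.compAddMonoidHom_apply, ZMod.stdAddChar_apply,
    ZMod.toCircle_apply, ← Complex.exp_nat_mul]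
  congr 1
  simp only [LinearMap.toAddMonoidHom_coe, dotProduct]
  ring

variable [Fintype K]

lemma traceChar_ne_one : traceChar ℓ K ≠ 1 := by
  obtain ⟨x, hx⟩ := Algebra.trace_surjective (ZMod ℓ) K 1
  intro h
  have h1 : ZMod.stdAddChar (1 : ZMod ℓ) = ZMod.stdAddChar (0 : ZMod ℓ) := by
    simpa [traceChar, hx] using DFunLike.congr_fun h x
  exact one_ne_zero (ZMod.injective_stdAddChar h1)

lemma FourierMat_mul_conjTranspose (m : ℕ) :
    FourierMat ℓ K m * (FourierMat ℓ K m)ᴴ = ((Fintype.card K : ℂ) ^ m) • 1 := by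
  ext w w'
  simp only [mul_apply, conjTranspose_apply, FourierMat_apply, RCLike.star_def,
    sum_addChar_dotProduct_mul_conj (traceChar_ne_one ℓ K), Matrix.smul_apply, one_apply,
    smul_eq_mul, mul_ite, mul_one, mul_zero]

end TraceCharacter

section TwistedDual

variable {K : Type} [Field K] {m n : ℕ}

def twistedPairing (v : (Fin m → K) × (Fin n → K) × (Fin m → K)) :
    ((Fin m → K) × (Fin n → K) × (Fin m → K)) →ₗ[K] K where
  toFun c := v.1 ⬝ᵥ c.1 + v.2.1 ⬝ᵥ c.2.1 - v.2.2 ⬝ᵥ c.2.2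
  map_add' c c' := by
    simp only [Prod.fst_add, Prod.snd_add, dotProduct_add]
    ring
  map_smul' t c := by
    simp only [Prod.smul_fst, Prod.smul_snd, dotProduct_smul, smul_eq_mul, RingHom.id_apply]
    ring

lemma mem_twistedDual_iff (C : Set ((Fin m → K) × (Fin n → K) × (Fin m → K)))
    (v : (Fin m → K) × (Fin n → K) × (Fin m → K)) :
    v ∈ twistedDual K C ↔ ∀ c ∈ C, twistedPairing v c = 0 := Iff.rfl

lemma ite_mem_twistedDual [Fintype K] {ψ : AddChar K ℂ} (hψ : ψ ≠ 1)
    (C : Submodule K ((Fin m → K) × (Fin n → K) × (Fin m → K)))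
    (v : (Fin m → K) × (Fin n → K) × (Fin m → K)) :
    (if v ∈ twistedDual K C then (1 : ℂ) else 0)
      = (Fintype.card C : ℂ)⁻¹ * ∑ c : C, ψ (twistedPairing v c) := by
  rw [sum_submodule_addChar_linearMap hψ, mem_twistedDual_iff]
  simp only [SetLike.mem_coe]
  split_ifs
  · exact (inv_mul_cancel₀ (Nat.cast_ne_zero.mpr Fintype.card_ne_zero)).symm
  · rw [mul_zero]

end TwistedDual

lemma mul_WAM_mul_apply {K : Type} [Field K] [Fintype K] {m n : ℕ}
    (P Q : Matrix (Fin m → K) (Fin m → K) ℂ) (S : Set ((Fin m → K) × (Fin n → K) × (Fin m → K)))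
    (x z : ℂ) (w w' : Fin m → K) :
    (P * WAM K S x z * Q) w w'
      = ∑ v, if v ∈ S then P w v.1 * (x ^ (n - wt K v.2.1) * z ^ wt K v.2.1) * Q v.2.2 w'
          else 0 := by
  simp only [mul_apply, WAM, Finset.mul_sum, Finset.sum_mul, Fintype.sum_prod_type, mul_ite,
    ite_mul, mul_zero, zero_mul]
  rw [Finset.sum_comm]
  exact Finset.sum_congr rfl fun a _ ↦ Finset.sum_comm

lemma sum_ite_mem_submodule {K V M : Type*} [Field K] [AddCommGroup V] [Module K V] [Fintype V]
    [AddCommMonoid M] (W : Submodule K V) (g : V → M) :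
    ∑ v, (if v ∈ W then g v else 0) = ∑ c : W, g c := by
  rw [← Finset.sum_filter]
  exact Finset.sum_subtype _ (by simp) g

theorem WAM_twistedDual_eq_fourier_conj {m n : ℕ}
    (C : Submodule F ((Fin m → F) × (Fin n → F) × (Fin m → F))) {y : ℂ}
    (hy : 1 + ((Fintype.card F : ℂ) - 1) * y ≠ 0) :
    WAM F (twistedDual F (SetLike.coe C)) 1 y
      = ((1 + ((Fintype.card F : ℂ) - 1) * y) ^ n / Fintype.card C) •
          (FourierMat p F m
            * WAM F (SetLike.coe C) 1 ((1 - y) / (1 + ((Fintype.card F : ℂ) - 1) * y))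
            * (FourierMat p F m)ᴴ) := by
  set ψ := traceChar p F
  set Y := 1 + ((Fintype.card F : ℂ) - 1) * y
  set z := (1 - y) / Y
  have hψ : ψ ≠ 1 := traceChar_ne_one p F
  have hpairing : ∀ (w w' : Fin m → F) (u : Fin n → F)
      (c : (Fin m → F) × (Fin n → F) × (Fin m → F)), ψ (twistedPairing (w, u, w') c)
        = ψ (w ⬝ᵥ c.1) * starRingEnd ℂ (ψ (w' ⬝ᵥ c.2.2)) * ψ (u ⬝ᵥ c.2.1) := fun w w' u c ↦ by
    rw [← AddChar.map_neg_eq_conj, ← AddChar.map_add_eq_mul, ← AddChar.map_add_eq_mul]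
    simp only [twistedPairing, LinearMap.coe_mk, AddHom.coe_mk]
    congr 1
    ring
  ext w w'
  calc WAM F (twistedDual F (SetLike.coe C)) 1 y w w'
      = ∑ u : Fin n → F, (if (w, u, w') ∈ twistedDual F (SetLike.coe C) then 1 else 0)
          * y ^ wt F u := by
        simp only [WAM, one_pow, one_mul, ite_mul, zero_mul]
    _ = (Fintype.card C : ℂ)⁻¹ * ∑ c : C, ψ (w ⬝ᵥ c.1.1) * starRingEnd ℂ (ψ (w' ⬝ᵥ c.1.2.2))
          * ∑ u : Fin n → F, ψ (u ⬝ᵥ c.1.2.1) * y ^ wt F u := by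
        simp only [ite_mem_twistedDual hψ, hpairing, Finset.mul_sum, Finset.sum_mul]
        rw [Finset.sum_comm]
        exact Finset.sum_congr rfl fun c _ ↦ Finset.sum_congr rfl fun u _ ↦ by ring
    _ = (Fintype.card C : ℂ)⁻¹ * ∑ c : C, ψ (w ⬝ᵥ c.1.1) * starRingEnd ℂ (ψ (w' ⬝ᵥ c.1.2.2))
          * (Y ^ n * z ^ wt F c.1.2.1) := by
        congr 1
        refine Finset.sum_congr rfl fun c _ ↦ ?_
        rw [sum_addChar_dotProduct_mul_pow_wt hψ _ hy]
    _ = _ := by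
        rw [Matrix.smul_apply, mul_WAM_mul_apply]
        simp only [SetLike.mem_coe]
        rw [sum_ite_mem_submodule C, smul_eq_mul, Finset.mul_sum, Finset.mul_sum]
        refine Finset.sum_congr rfl fun c _ ↦ ?_
        simp only [FourierMat_apply, conjTranspose_apply, RCLike.star_def, one_pow, one_mul]
        ring

theorem Matrix.inv_conj_of_mul_eq_one {ι R : Type*} [Fintype ι] [DecidableEq ι] [CommRing R]
    {P Q : Matrix ι ι R} (h : P * Q = 1) (M : Matrix ι ι R) :
    (P * M * Q)⁻¹ = P * M⁻¹ * Q := by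
  rw [Matrix.mul_inv_rev, Matrix.mul_inv_rev, inv_eq_left_inv h, inv_eq_right_inv h, mul_assoc]

lemma Matrix.map_mul_map_eq_one {ι R S : Type*} [Fintype ι] [DecidableEq ι] [Semiring R]
    [Semiring S] (f : R →+* S) {P Q : Matrix ι ι R} (h : P * Q = 1) : P.map f * Q.map f = 1 := by
  rw [← Matrix.map_mul, h, Matrix.map_one _ (map_zero f) (map_one f)]

lemma oneSubDM_conj_of_mul_eq_one {K : Type} [Fintype K] {m : ℕ}
    {P Q : Matrix (Fin m → K) (Fin m → K) ℂ} (h : P * Q = 1)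
    (B : Matrix (Fin m → K) (Fin m → K) ℂ) :
    oneSubDM K (P * B * Q)
      = P.map PowerSeries.C * oneSubDM K B * Q.map PowerSeries.C := by
  rw [oneSubDM, oneSubDM, Matrix.map_mul, Matrix.map_mul, mul_sub, sub_mul, mul_one,
    Matrix.map_mul_map_eq_one _ h, Matrix.mul_smul, Matrix.smul_mul]

theorem stmt12 (m n k : ℕ)
    (C : Submodule F ((Fin m → F) × (Fin n → F) × (Fin m → F)))
    (hC : Module.finrank F C = m + k) (y : ℂ)
    (hy : 1 + ((Fintype.card F : ℂ) - 1) * y ≠ 0) :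
    (oneSubDM F (WAM F (twistedDual F
        (C : Set ((Fin m → F) × (Fin n → F) × (Fin m → F)))) 1 y))⁻¹
      = ((Fintype.card F : ℂ) ^ m)⁻¹ •
          ((FourierMat p F m).map (PowerSeries.C : ℂ →+* PowerSeries ℂ) *
            (oneSubDM F
              (((1 + ((Fintype.card F : ℂ) - 1) * y) ^ n / (Fintype.card F : ℂ) ^ k) •
                WAM F (C : Set ((Fin m → F) × (Fin n → F) × (Fin m → F)))
                  1 ((1 - y) / (1 + ((Fintype.card F : ℂ) - 1) * y))))⁻¹ *
            ((FourierMat p F m)ᴴ).map (PowerSeries.C : ℂ →+* PowerSeries ℂ)) := by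
  set q : ℂ := (Fintype.card F : ℂ)
  have hqm : q ^ m ≠ 0 := pow_ne_zero _ (Nat.cast_ne_zero.mpr Fintype.card_ne_zero)
  have hcard : (Fintype.card C : ℂ) = q ^ k * q ^ m := by
    rw [Module.card_eq_pow_finrank (K := F), hC, add_comm, pow_add]
    push_cast
    rfl
  have hFourier : FourierMat p F m * ((q ^ m)⁻¹ • (FourierMat p F m)ᴴ) = 1 := by
    rw [Matrix.mul_smul, FourierMat_mul_conjTranspose, smul_smul, inv_mul_cancel₀ hqm, one_smul]
  have hMacWilliams : WAM F (twistedDual F (SetLike.coe C)) 1 y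
      = FourierMat p F m * (((1 + (q - 1) * y) ^ n / q ^ k) •
          WAM F (SetLike.coe C) 1 ((1 - y) / (1 + (q - 1) * y))) *
        ((q ^ m)⁻¹ • (FourierMat p F m)ᴴ) := by
    rw [WAM_twistedDual_eq_fourier_conj p F C hy, Matrix.mul_smul, Matrix.mul_smul,
      Matrix.smul_mul, smul_smul, hcard]
    congr 1
    simp only [q]
    ring
  have hmap_smul : ((q ^ m)⁻¹ • (FourierMat p F m)ᴴ).map PowerSeries.C
      = (q ^ m)⁻¹ • (FourierMat p F m)ᴴ.map PowerSeries.C :=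
    Matrix.map_smul _ _ (fun a ↦ by rw [smul_eq_mul, map_mul, PowerSeries.smul_eq_C_mul]) _
  rw [hMacWilliams, oneSubDM_conj_of_mul_eq_one hFourier,
    Matrix.inv_conj_of_mul_eq_one (Matrix.map_mul_map_eq_one _ hFourier), hmap_smul,
    Matrix.mul_smul]
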